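/- arXiv:1904.02506 — 4 statements merged into one kernel-verified Lean document; each statement's English description precedes it below -/
import Mathlib

section
/- Let T be a Hom-finite Krull-Schmidt R-linear triangulated category and let A → B →g C → ΣA be an Auslander-Reiten triangle in T. For any object U of T, the induced map g_* : Hom(U,B) → Hom(U,C) is surjective if and only if C is not a direct summand of U. -/
open CategoryTheory CategoryTheory.Limits CategoryTheory.Pretriangulated

universe v u

/-- The length of an `R`-module, defined as the Krull dimension of its submodule
lattice, truncated to a natural number (which recovers the usual length for
modules of finite length). -/
noncomputable def rlen (R : Type*) [Ring R] (M : Type*) [AddCommGroup M] [Module R M] : ℕ :=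
  (WithBot.unbotD 0 (Order.krullDim (Submodule R M))).toNat

section Additive

variable (C : Type u) [Category.{v} C] [Preadditive C] [HasBinaryBiproducts C]

/-- Hom-finiteness over `R`: every Hom-module has finite length. -/
def HomFinite (R : Type*) [CommRing R] [CategoryTheory.Linear R C] : Prop :=
  ∀ X Y : C, IsFiniteLength R (X ⟶ Y)

/-- A Krull-Schmidt category: every object is a finite biproduct of objects with
local endomorphism rings. -/
def KrullSchmidt [HasFiniteBiproducts C] : Prop :=
  ∀ X : C, ∃ (n : ℕ) (f : Fin n → C),
    Nonempty (X ≅ ⨁ f) ∧ ∀ i, IsLocalRing (End (f i))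

/-- `X` is a direct summand of `U`. -/
def IsDirectSummand {C : Type u} [Category.{v} C] [Preadditive C] [HasBinaryBiproducts C]
    (X U : C) : Prop :=
  ∃ Z : C, Nonempty (U ≅ X ⊞ Z)

/-- The free abelian group on isomorphism classes of objects of `C`. -/
def FreeK0 : Type _ := FreeAbelianGroup (Quotient (isIsomorphicSetoid C))

noncomputable instance : AddCommGroup (FreeK0 C) :=
  inferInstanceAs (AddCommGroup (FreeAbelianGroup _))

/-- The subgroup of split relations `[A ⊞ B] - [A] - [B]`. -/
noncomputable def splitSubgroup : AddSubgroup (FreeK0 C) :=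
  AddSubgroup.closure {x | ∃ A B : C,
    x = FreeAbelianGroup.of (Quotient.mk (isIsomorphicSetoid C) (A ⊞ B))
      - FreeAbelianGroup.of (Quotient.mk (isIsomorphicSetoid C) A)
      - FreeAbelianGroup.of (Quotient.mk (isIsomorphicSetoid C) B)}

/-- The split Grothendieck group `K₀(C,0)`. -/
noncomputable def K0 : Type _ := FreeK0 C ⧸ splitSubgroup C

noncomputable instance : AddCommGroup (K0 C) :=
  inferInstanceAs (AddCommGroup (_ ⧸ splitSubgroup C))

/-- The class `[X]` of an object `X` in `K₀(C,0)`. -/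
noncomputable def cls (X : C) : K0 C :=
  QuotientAddGroup.mk (FreeAbelianGroup.of (Quotient.mk (isIsomorphicSetoid C) X))

end Additive

section Triangulated

variable (C : Type u) [Category.{v} C] [Preadditive C] [HasZeroObject C]
  [HasShift C ℤ] [∀ n : ℤ, (shiftFunctor C n).Additive] [Pretriangulated C]
  [HasBinaryBiproducts C]

/-- An Auslander-Reiten triangle. -/
def IsARTriangle (T : Triangle C) : Prop :=
  (T ∈ distTriang C) ∧ Indecomposable T.obj₁ ∧ Indecomposable T.obj₃ ∧ T.mor₃ ≠ 0 ∧
    ∀ ⦃W : C⦄ (t : W ⟶ T.obj₃), ¬ IsSplitEpi t → ∃ t' : W ⟶ T.obj₂, t' ≫ T.mor₂ = t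

/-- The subgroup `Ex(C)` of `K₀(C,0)` generated by distinguished triangles. -/
noncomputable def ExSubgroup : AddSubgroup (K0 C) :=
  AddSubgroup.closure {x | ∃ T, (T ∈ distTriang C) ∧
    x = cls C T.obj₁ - cls C T.obj₂ + cls C T.obj₃}

/-- The subgroup `AR(C)` of `K₀(C,0)` generated by Auslander-Reiten triangles. -/
noncomputable def ARSubgroup : AddSubgroup (K0 C) :=
  AddSubgroup.closure {x | ∃ T, IsARTriangle C T ∧
    x = cls C T.obj₁ - cls C T.obj₂ + cls C T.obj₃}

end Triangulated

/-!
A morphism `t : U ⟶ Co` that factors through `g` cannot be a split epimorphism: otherwise `g`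
would be an epimorphism, forcing the third morphism `h` of the distinguished triangle to vanish.
Conversely the Auslander-Reiten property makes every non-split epimorphism factor through `g`.
So `g_*` is surjective exactly when there is no split epimorphism `U ⟶ Co`, and in a
pretriangulated category a split epimorphism `t : U ⟶ Co` exhibits `Co` as a direct summand of
`U`, because the triangle completing `t` has vanishing third morphism and hence splits.
-/

section ARTriangle

variable {C : Type u} [Category.{v} C] [Preadditive C] [HasZeroObject C] [HasShift C ℤ]
  [∀ n : ℤ, (shiftFunctor C n).Additive] [Pretriangulated C]

lemma not_epi_comp_mor₂_of_distTriang {T : Triangle C} (hT : T ∈ distTriang C)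
    (hT₃ : T.mor₃ ≠ 0) {U : C} (t : U ⟶ T.obj₂) : ¬ Epi (t ≫ T.mor₂) := fun _ =>
  hT₃ (T.mor₃_eq_zero_of_epi₂ hT (epi_of_epi t T.mor₂))

variable [HasBinaryBiproducts C]

lemma isDirectSummand_of_isSplitEpi {U X : C} (t : U ⟶ X) [IsSplitEpi t] :
    IsDirectSummand X U := by
  obtain ⟨K, k, w, hT⟩ := distinguished_cocone_triangle₁ t
  have hw : (Triangle.mk k t w).mor₃ = 0 :=
    Triangle.mor₃_eq_zero_of_epi₂ _ hT (inferInstanceAs (Epi t))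
  obtain ⟨e, -, -⟩ := exists_iso_binaryBiproduct_of_distTriang _ hT hw
  exact ⟨K, ⟨e.trans (biprod.braiding K X)⟩⟩

lemma isDirectSummand_iff_exists_isSplitEpi (X U : C) :
    IsDirectSummand X U ↔ ∃ t : U ⟶ X, IsSplitEpi t := by
  constructor
  · rintro ⟨Z, ⟨e⟩⟩
    exact ⟨e.hom ≫ biprod.fst, IsSplitEpi.mk' ⟨biprod.inl ≫ e.inv, by simp⟩⟩
  · rintro ⟨t, _⟩
    exact isDirectSummand_of_isSplitEpi t

lemma IsARTriangle.postcomp_surjective_iff {T : Triangle C} (hT : IsARTriangle C T) (U : C) :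
    Function.Surjective (fun t : U ⟶ T.obj₂ => t ≫ T.mor₂) ↔
      ∀ t : U ⟶ T.obj₃, ¬ IsSplitEpi t := by
  obtain ⟨hdist, -, -, hT₃, hfac⟩ := hT
  constructor
  · rintro hsurj t _
    obtain ⟨t', rfl⟩ := hsurj t
    exact not_epi_comp_mor₂_of_distTriang hdist hT₃ t' inferInstance
  · exact fun hnse t => hfac t (hnse t)

end ARTriangle

universe w

variable {R : Type w} [CommRing R]
variable {C : Type u} [Category.{v} C] [Preadditive C] [CategoryTheory.Linear R C]
  [HasZeroObject C] [HasShift C ℤ] [∀ n : ℤ, (shiftFunctor C n).Additive]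
  [Pretriangulated C] [HasFiniteBiproducts C] [EssentiallySmall.{v} C]
theorem ar_triangle_postcomp_surjective_iff_general
    {A B Co : C} (f : A ⟶ B) (g : B ⟶ Co) (h : Co ⟶ A⟦(1 : ℤ)⟧)
    (hAR : IsARTriangle C (Triangle.mk f g h)) (U : C) :
    Function.Surjective (fun t : U ⟶ B => t ≫ g) ↔ ¬ IsDirectSummand Co U := by
  rw [isDirectSummand_iff_exists_isSplitEpi, not_exists]
  exact hAR.postcomp_surjective_iff U

/-- In a Hom-finite Krull-Schmidt `R`-linear triangulated category, for an
Auslander-Reiten triangle `A ⟶ B ⟶g C ⟶ ΣA` and any object `U`, the induced map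
`g_* : Hom(U,B) ⟶ Hom(U,C)` is surjective iff `C` is not a direct summand of `U`. -/
theorem ar_triangle_postcomp_surjective_iff
    (hfin : HomFinite C R) (hKS : KrullSchmidt C)
    {A B Co : C} (f : A ⟶ B) (g : B ⟶ Co) (h : Co ⟶ A⟦(1 : ℤ)⟧)
    (hAR : IsARTriangle C (Triangle.mk f g h)) (U : C) :
    Function.Surjective (fun t : U ⟶ B => t ≫ g) ↔ ¬ IsDirectSummand Co U :=
  ar_triangle_postcomp_surjective_iff_general f g h hAR U
end

section
/- Let T be a Hom-finite Krull-Schmidt R-linear triangulated category, A →f B → C → ΣA an Auslander-Reiten triangle in T, and U an indecomposable object of T. Then the induced map f_* : Hom(U,A) → Hom(U,B) is injective if and only if U is not isomorphic to Σ⁻¹C. -/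
open CategoryTheory CategoryTheory.Limits CategoryTheory.Pretriangulated

universe v u

universe w

variable {R : Type w} [CommRing R]
variable {C : Type u} [Category.{v} C] [Preadditive C] [CategoryTheory.Linear R C]
  [HasZeroObject C] [HasShift C ℤ] [∀ n : ℤ, (shiftFunctor C n).Additive]
  [Pretriangulated C] [HasFiniteBiproducts C] [EssentiallySmall.{v} C]

/-!
Shifting by `1` is an equivalence, so `f_*` is injective on `Hom(U, A)` iff `(Σf)_*` is injective
on `Hom(ΣU, ΣA)`. By exactness of `Hom(ΣU, -)` along the rotated triangle `B → C → ΣA → ΣB`, the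
kernel of `(Σf)_*` is the image of `h_*`. A morphism `ΣU → C` that is not a split epimorphism
factors through `g`, hence is killed by `h`; a split epimorphism `ΣU → C` is an isomorphism since
`ΣU` is indecomposable, and then it is not killed by `h ≠ 0`. So `h_*` vanishes iff `ΣU ≇ C`.
-/

namespace CategoryTheory

section

variable {D E : Type*} [Category D] [Category E]

lemma Functor.FullyFaithful.postcomp_injective_iff {F : D ⥤ E} (hF : F.FullyFaithful)
    {A B : D} (f : A ⟶ B) (U : D) :
    Function.Injective (fun t : U ⟶ A => t ≫ f) ↔
      Function.Injective (fun t : F.obj U ⟶ F.obj A => t ≫ F.map f) := by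
  have : (fun t : F.obj U ⟶ F.obj A => t ≫ F.map f) =
      hF.homEquiv ∘ (fun t : U ⟶ A => t ≫ f) ∘ hF.homEquiv.symm := by
    ext t; simp [Functor.FullyFaithful.homEquiv]
  rw [this, EquivLike.comp_injective, EquivLike.injective_comp]

lemma Equivalence.nonempty_functor_obj_iso_iff (e : D ≌ E) {X : D} {Y : E} :
    Nonempty (e.functor.obj X ≅ Y) ↔ Nonempty (X ≅ e.inverse.obj Y) :=
  ⟨fun ⟨i⟩ => ⟨e.unitIso.app X ≪≫ e.inverse.mapIso i⟩,
    fun ⟨i⟩ => ⟨e.functor.mapIso i ≪≫ e.counitIso.app Y⟩⟩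

lemma Indecomposable.map_of_fullyFaithful [Preadditive D] [Preadditive E]
    [HasBinaryBiproducts D] [HasBinaryBiproducts E] {F : D ⥤ E} [F.Additive]
    (hF : F.FullyFaithful) [F.EssSurj] {X : D} (hX : Indecomposable X) :
    Indecomposable (F.obj X) := by
  have := preservesBinaryBiproducts_of_preservesBiproducts F
  refine ⟨fun hFX => hX.1 ?_, fun Y Z e => ?_⟩
  · rw [IsZero.iff_id_eq_zero] at hFX ⊢
    exact hF.map_injective (by simpa using hFX)
  · let e' : X ≅ F.objPreimage Y ⊞ F.objPreimage Z := hF.preimageIso <|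
      e ≪≫ biprod.mapIso (F.objObjPreimageIso Y).symm (F.objObjPreimageIso Z).symm ≪≫
        (F.mapBiprod _ _).symm
    exact (hX.2 _ _ e').imp
      (fun h => (F.map_isZero h).of_iso (F.objObjPreimageIso Y).symm)
      (fun h => (F.map_isZero h).of_iso (F.objObjPreimageIso Z).symm)

end

variable {D : Type*} [Category D] [Preadditive D] [HasZeroObject D] [HasShift D ℤ]
  [∀ n : ℤ, (shiftFunctor D n).Additive] [Pretriangulated D]

lemma isIso_of_isSplitMono_of_indecomposable [HasBinaryBiproducts D] {Y X : D} (σ : Y ⟶ X)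
    [IsSplitMono σ] (hX : Indecomposable X) (hY : ¬IsZero Y) : IsIso σ := by
  obtain ⟨Z, _, _, hT⟩ := distinguished_cocone_triangle σ
  obtain ⟨e, -, -⟩ := exists_iso_binaryBiproduct_of_distTriang _ hT
    (Triangle.mor₃_eq_zero_of_mono₁ _ hT (inferInstanceAs (Mono σ)))
  have hZ : IsZero Z := (hX.2 _ _ e).resolve_left hY
  exact (Triangle.isZero₃_iff_isIso₁ _ hT).1 hZ

lemma isIso_of_isSplitEpi_of_indecomposable [HasBinaryBiproducts D] {X Y : D} (s : X ⟶ Y)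
    [IsSplitEpi s] (hX : Indecomposable X) (hY : ¬IsZero Y) : IsIso s := by
  have := isIso_of_isSplitMono_of_indecomposable (section_ s) hX hY
  have : IsIso (section_ s ≫ s) := by rw [IsSplitEpi.id]; infer_instance
  exact IsIso.of_isIso_comp_left (section_ s) s

lemma Pretriangulated.postcomp_shift_mor₁_injective_iff (T : Triangle D)
    (hT : T ∈ distTriang D) (V : D) :
    Function.Injective (fun x : V ⟶ T.obj₁⟦(1 : ℤ)⟧ => x ≫ T.mor₁⟦(1 : ℤ)⟧') ↔
      ∀ s : V ⟶ T.obj₃, s ≫ T.mor₃ = 0 := by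
  refine ⟨fun hinj s => hinj ?_, fun h => ?_⟩
  · simp [comp_distTriang_mor_zero₃₁ T hT]
  · refine (injective_iff_map_eq_zero (Preadditive.rightComp V (T.mor₁⟦(1 : ℤ)⟧'))).2 ?_
    intro x hx
    obtain ⟨s, rfl⟩ := T.coyoneda_exact₁ hT x hx
    exact h s

lemma _root_.IsARTriangle.forall_comp_mor₃_eq_zero_iff [HasBinaryBiproducts D] {T : Triangle D}
    (hAR : IsARTriangle D T) {V : D} (hV : Indecomposable V) :
    (∀ s : V ⟶ T.obj₃, s ≫ T.mor₃ = 0) ↔ ¬Nonempty (V ≅ T.obj₃) := by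
  obtain ⟨hT, -, hT₃, hmor₃, hfac⟩ := hAR
  refine ⟨fun h ⟨e⟩ => hmor₃ ?_, fun hV₃ s => ?_⟩
  · simpa using e.inv ≫= h e.hom
  · have hs : ¬IsSplitEpi s := fun _ =>
      have := isIso_of_isSplitEpi_of_indecomposable s hV hT₃.1
      hV₃ ⟨asIso s⟩
    obtain ⟨t, rfl⟩ := hfac s hs
    simp [comp_distTriang_mor_zero₂₃ T hT]

end CategoryTheory

theorem ar_triangle_postcomp_injective_iff_general
    {A B Co : C} (f : A ⟶ B) (g : B ⟶ Co) (h : Co ⟶ A⟦(1 : ℤ)⟧)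
    (hAR : IsARTriangle C (Triangle.mk f g h)) (U : C) (hU : Indecomposable U) :
    Function.Injective (fun t : U ⟶ A => t ≫ f) ↔
      ¬ Nonempty (U ≅ (shiftFunctor C (-1 : ℤ)).obj Co) := by
  have hshift := Functor.FullyFaithful.ofFullyFaithful (shiftFunctor C (1 : ℤ))
  calc Function.Injective (fun t : U ⟶ A => t ≫ f)
      ↔ Function.Injective (fun t : U⟦(1 : ℤ)⟧ ⟶ A⟦(1 : ℤ)⟧ => t ≫ f⟦(1 : ℤ)⟧') :=
        hshift.postcomp_injective_iff f U
    _ ↔ ∀ s : U⟦(1 : ℤ)⟧ ⟶ Co, s ≫ h = 0 :=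
        postcomp_shift_mor₁_injective_iff _ hAR.1 _
    _ ↔ ¬Nonempty (U⟦(1 : ℤ)⟧ ≅ Co) :=
        hAR.forall_comp_mor₃_eq_zero_iff (Indecomposable.map_of_fullyFaithful hshift hU)
    _ ↔ ¬Nonempty (U ≅ (shiftFunctor C (-1 : ℤ)).obj Co) :=
        not_congr (shiftEquiv C (1 : ℤ)).nonempty_functor_obj_iso_iff

/-- In a Hom-finite Krull-Schmidt `R`-linear triangulated category, for an
Auslander-Reiten triangle `A ⟶f B ⟶ C ⟶ ΣA` and an indecomposable object `U`, the
induced map `f_* : Hom(U,A) ⟶ Hom(U,B)` is injective iff `U ≇ Σ⁻¹C`. -/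
theorem ar_triangle_postcomp_injective_iff
    (hfin : HomFinite C R) (hKS : KrullSchmidt C)
    {A B Co : C} (f : A ⟶ B) (g : B ⟶ Co) (h : Co ⟶ A⟦(1 : ℤ)⟧)
    (hAR : IsARTriangle C (Triangle.mk f g h)) (U : C) (hU : Indecomposable U) :
    Function.Injective (fun t : U ⟶ A => t ≫ f) ↔
      ¬ Nonempty (U ≅ (shiftFunctor C (-1 : ℤ)).obj Co) :=
  ar_triangle_postcomp_injective_iff_general f g h hAR U hU
end

section
/- Let T be a Hom-finite Krull-Schmidt R-linear triangulated category in which the subgroup Ex(T) of K₀(T,0) generated by [X] − [Y] + [Z] over all distinguished triangles X → Y → Z → ΣX equals the subgroup AR(T) generated by such elements coming from Auslander-Reiten triangles. If there exists an object X in T such that Hom(Y,X) ≠ 0 for every non-zero object Y, then T has only finitely many isomorphism classes of indecomposable objects. -/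
/-
For an object `Y`, `M ↦ length_R Hom(Y, M)` is additive on biproducts, hence a homomorphism
`K₀(T,0) → ℤ`. If `Y` is indecomposable and `A → B → C → ΣA` is an Auslander-Reiten triangle with
`Y ≇ C` and `Y ≇ Σ⁻¹C`, then no map `Y → C` or `ΣY → C` is a split epimorphism, so all of them lift
to `B`, and `Hom(Y, -)` turns the triangle into a short exact sequence: the homomorphism vanishes on
its relation. The relation `[X] + [ΣX]` of the triangle `X → 0 → ΣX → ΣX` lies in `Ex(T) = AR(T)`,
so it is a finite combination of such relations and is killed by `length Hom(Y, -)` for all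
indecomposable `Y` outside finitely many isomorphism classes. Since `Hom(Y, X) ≠ 0`, its value is
positive for every indecomposable `Y`.
-/

open CategoryTheory CategoryTheory.Limits CategoryTheory.Pretriangulated

universe v u

namespace K0

variable {C : Type u} [Category.{v} C] [Preadditive C] [HasBinaryBiproducts C]

noncomputable def lift {A : Type*} [AddCommGroup A] (f : C → A)
    (hf : ∀ X Y : C, (X ≅ Y) → f X = f Y) (hadd : ∀ X Y : C, f (X ⊞ Y) = f X + f Y) :
    K0 C →+ A :=
  QuotientAddGroup.lift _ (FreeAbelianGroup.lift (Quotient.lift f fun X Y ⟨e⟩ => hf X Y e)) (by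
    rw [splitSubgroup, AddSubgroup.closure_le]
    rintro _ ⟨X, Y, rfl⟩
    change FreeAbelianGroup.lift _ (_ - _ - _) = (0 : A)
    simp [hadd])

@[simp]
lemma lift_cls {A : Type*} [AddCommGroup A] (f : C → A)
    (hf : ∀ X Y : C, (X ≅ Y) → f X = f Y) (hadd : ∀ X Y : C, f (X ⊞ Y) = f X + f Y) (X : C) :
    lift f hf hadd (cls C X) = f X :=
  FreeAbelianGroup.lift_apply_of _ _

end K0

namespace CategoryTheory

open Pretriangulated

variable {C : Type u} [Category.{v} C] [Preadditive C] [HasShift C ℤ]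
  [∀ n : ℤ, (shiftFunctor C n).Additive]

lemma not_isZero_shift {Z : C} (hZ : ¬ IsZero Z) (n : ℤ) : ¬ IsZero (Z⟦n⟧) := fun h =>
  hZ (((shiftFunctor C (-n)).map_isZero h).of_iso
    ((shiftFunctorCompIsoId C n (-n) (add_neg_cancel n)).symm.app Z))

variable [HasZeroObject C] [Pretriangulated C]

/-- A split epimorphism completes to a distinguished triangle with `mor₃ = 0`, which splits. -/
lemma _root_.Indecomposable.nonempty_iso_of_isSplitEpi {Y Z : C} (hY : Indecomposable Y)
    (hZ : ¬ IsZero Z) (t : Y ⟶ Z) [IsSplitEpi t] : Nonempty (Y ≅ Z) := by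
  obtain ⟨K, k, h, hT⟩ := distinguished_cocone_triangle₁ t
  have h_eq_zero : h = 0 := by
    have : t ≫ h = 0 := comp_distTriang_mor_zero₂₃ _ hT
    rw [← Category.id_comp h, ← IsSplitEpi.id t, Category.assoc, this, comp_zero]
  obtain ⟨e, -⟩ := exists_iso_binaryBiproduct_of_distTriang _ hT h_eq_zero
  have hK : IsZero K := (hY.2 _ _ e).resolve_right hZ
  have : IsIso t := (Triangle.isZero₁_iff_isIso₂ _ hT).1 hK
  exact ⟨asIso t⟩

lemma _root_.Indecomposable.nonempty_iso_shift_of_isSplitEpi {Y Z : C} (hY : Indecomposable Y)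
    (hZ : ¬ IsZero Z) (t : Y⟦(1 : ℤ)⟧ ⟶ Z) [IsSplitEpi t] : Nonempty (Y ≅ Z⟦(-1 : ℤ)⟧) :=
  Indecomposable.nonempty_iso_of_isSplitEpi hY (not_isZero_shift hZ _)
    ((shiftFunctorCompIsoId C (1 : ℤ) (-1) (add_neg_cancel 1)).inv.app Y ≫ t⟦(-1 : ℤ)⟧')

section Ring

variable {R : Type*} [Ring R] [Linear R C]

lemma length_hom_obj₂_eq_add_of_distTriang {T : Triangle C} (hT : T ∈ distTriang C) (Y : C)
    (hY : ∀ t : Y ⟶ T.obj₃, ∃ t', t' ≫ T.mor₂ = t)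
    (hY₁ : ∀ t : Y⟦(1 : ℤ)⟧ ⟶ T.obj₃, ∃ t', t' ≫ T.mor₂ = t) :
    Module.length R (Y ⟶ T.obj₂) =
      Module.length R (Y ⟶ T.obj₁) + Module.length R (Y ⟶ T.obj₃) := by
  refine Module.length_eq_add_of_exact (Linear.rightComp R Y T.mor₁)
    (Linear.rightComp R Y T.mor₂) ?_ (fun t => (hY t).imp fun _ => id)
    fun u => ⟨fun hu => ?_, ?_⟩
  · -- `u⟦1⟧` factors through `T.mor₃`, and lifting the factor along `T.mor₂` shows it is zero.
    refine (injective_iff_map_eq_zero _).2 fun u hu => (shiftFunctor C (1 : ℤ)).map_injective ?_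
    obtain ⟨w, hw⟩ := Triangle.coyoneda_exact₁ T hT (u⟦(1 : ℤ)⟧')
      (by rw [← Functor.map_comp]; simp_all)
    obtain ⟨w', rfl⟩ := hY₁ w
    rw [hw, Category.assoc, comp_distTriang_mor_zero₂₃ _ hT, comp_zero, Functor.map_zero]
  · exact (Triangle.coyoneda_exact₂ T hT u hu).imp fun _ h => h.symm
  · rintro ⟨u, rfl⟩
    simp [comp_distTriang_mor_zero₁₂ _ hT]

lemma length_hom_biprod (Y A B : C) :
    Module.length R (Y ⟶ A ⊞ B) = Module.length R (Y ⟶ A) + Module.length R (Y ⟶ B) :=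
  length_hom_obj₂_eq_add_of_distTriang (binaryBiproductTriangle_distinguished A B) Y
    (fun t => ⟨t ≫ biprod.inr, by erw [Category.assoc, biprod.inr_snd, Category.comp_id]⟩)
    (fun t => ⟨t ≫ biprod.inr, by erw [Category.assoc, biprod.inr_snd, Category.comp_id]⟩)

lemma _root_.IsARTriangle.length_hom_obj₂_eq_add {T : Triangle C} (hT : IsARTriangle C T)
    {Y : C} (hY : Indecomposable Y) (h₃ : ¬ Nonempty (Y ≅ T.obj₃))
    (h₃' : ¬ Nonempty (Y ≅ T.obj₃⟦(-1 : ℤ)⟧)) :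
    Module.length R (Y ⟶ T.obj₂) =
      Module.length R (Y ⟶ T.obj₁) + Module.length R (Y ⟶ T.obj₃) := by
  obtain ⟨hdist, -, hC, -, hlift⟩ := hT
  refine length_hom_obj₂_eq_add_of_distTriang hdist Y (fun t => hlift t fun _ => ?_)
    (fun t => hlift t fun _ => ?_)
  · exact h₃ (Indecomposable.nonempty_iso_of_isSplitEpi hY hC.1 t)
  · exact h₃' (Indecomposable.nonempty_iso_shift_of_isSplitEpi hY hC.1 t)

end Ring

variable {R : Type*} [CommRing R] [Linear R C]

variable (R) in
noncomputable def homLength (hfin : HomFinite C R) (Y : C) : K0 C →+ ℤ :=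
  K0.lift (fun M => ((Module.length R (Y ⟶ M)).toNat : ℤ))
    (fun _ _ e => by rw [(Linear.homCongr R (Iso.refl Y) e).length_eq])
    (fun A B => by
      rw [length_hom_biprod, ENat.toNat_add (Module.length_ne_top_iff.2 (hfin Y A))
        (Module.length_ne_top_iff.2 (hfin Y B))]
      push_cast
      rfl)

variable {hfin : HomFinite C R}

@[simp]
lemma homLength_cls (Y M : C) :
    homLength R hfin Y (cls C M) = ((Module.length R (Y ⟶ M)).toNat : ℤ) :=
  K0.lift_cls ..

lemma homLength_cls_of_isZero (Y : C) {M : C} (hM : IsZero M) :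
    homLength R hfin Y (cls C M) = 0 := by
  have : Subsingleton (Y ⟶ M) := ⟨hM.eq_of_tgt⟩
  simp [Module.length_eq_zero]

lemma homLength_cls_pos {Y M : C} (f : Y ⟶ M) (hf : f ≠ 0) :
    0 < homLength R hfin Y (cls C M) := by
  have : Nontrivial (Y ⟶ M) := ⟨⟨f, 0, hf⟩⟩
  rw [homLength_cls, Nat.cast_pos]
  exact ENat.toNat_pos Module.length_pos.ne' (Module.length_ne_top_iff.2 (hfin Y M))

lemma _root_.IsARTriangle.homLength_eq_zero {T : Triangle C} (hT : IsARTriangle C T) {Y : C}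
    (hY : Indecomposable Y) (h₃ : ¬ Nonempty (Y ≅ T.obj₃))
    (h₃' : ¬ Nonempty (Y ≅ T.obj₃⟦(-1 : ℤ)⟧)) :
    homLength R hfin Y (cls C T.obj₁ - cls C T.obj₂ + cls C T.obj₃) = 0 := by
  rw [map_add, map_sub, homLength_cls, homLength_cls, homLength_cls,
    IsARTriangle.length_hom_obj₂_eq_add hT hY h₃ h₃',
    ENat.toNat_add (Module.length_ne_top_iff.2 (hfin Y _)) (Module.length_ne_top_iff.2 (hfin Y _))]
  push_cast
  ring

lemma exists_list_homLength_eq_zero_of_mem_ARSubgroup {x : K0 C} (hx : x ∈ ARSubgroup C) :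
    ∃ L : List C, ∀ Y : C, Indecomposable Y → (∀ V ∈ L, ¬ Nonempty (Y ≅ V)) →
      homLength R hfin Y x = 0 := by
  induction hx using AddSubgroup.closure_induction with
  | mem _ h =>
    obtain ⟨T, hT, rfl⟩ := h
    exact ⟨[T.obj₃, T.obj₃⟦(-1 : ℤ)⟧], fun Y hY hYL =>
      IsARTriangle.homLength_eq_zero hT hY (hYL _ (by simp)) (hYL _ (by simp))⟩
  | zero => exact ⟨[], fun _ _ _ => map_zero _⟩
  | add x y _ _ hx hy =>
    obtain ⟨L₁, hL₁⟩ := hx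
    obtain ⟨L₂, hL₂⟩ := hy
    refine ⟨L₁ ++ L₂, fun Y hY hYL => ?_⟩
    rw [map_add, hL₁ Y hY fun V hV => hYL V (List.mem_append_left _ hV),
      hL₂ Y hY fun V hV => hYL V (List.mem_append_right _ hV), add_zero]
  | neg x _ hx =>
    obtain ⟨L, hL⟩ := hx
    exact ⟨L, fun Y hY hYL => by rw [map_neg, hL Y hY hYL, neg_zero]⟩

end CategoryTheory

universe w

variable {R : Type w} [CommRing R]
variable {C : Type u} [Category.{v} C] [Preadditive C] [CategoryTheory.Linear R C]
  [HasZeroObject C] [HasShift C ℤ] [∀ n : ℤ, (shiftFunctor C n).Additive]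
  [Pretriangulated C] [HasFiniteBiproducts C] [EssentiallySmall.{v} C]
theorem finite_indecomposables_of_ar_generate_relations_general
    (hfin : HomFinite C R)
    (hEx : ExSubgroup C = ARSubgroup C)
    (hX : ∃ X : C, ∀ Y : C, ¬ IsZero Y → ∃ f : Y ⟶ X, f ≠ 0) :
    ∃ L : List C, ∀ U : C, Indecomposable U → ∃ V ∈ L, Nonempty (U ≅ V) := by
  obtain ⟨X, hX⟩ := hX
  open ZeroObject in
  have hT : cls C X - cls C 0 + cls C (X⟦(1 : ℤ)⟧) ∈ ARSubgroup C :=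
    hEx ▸ AddSubgroup.subset_closure ⟨_, rot_of_distTriang _ (contractible_distinguished X), rfl⟩
  obtain ⟨L, hL⟩ := exists_list_homLength_eq_zero_of_mem_ARSubgroup (hfin := hfin) hT
  refine ⟨L, fun U hU => by_contra fun hUL => ?_⟩
  simp only [not_exists, not_and] at hUL
  obtain ⟨f, hf⟩ := hX U hU.1
  have hzero := hL U hU hUL
  rw [map_add, map_sub, homLength_cls_of_isZero U (isZero_zero C)] at hzero
  have := homLength_cls_pos (hfin := hfin) f hf
  have : 0 ≤ homLength R hfin U (cls C (X⟦(1 : ℤ)⟧)) := by simp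
  linarith

/-- If the Auslander-Reiten triangles generate the relations for the Grothendieck group
of a Hom-finite Krull-Schmidt `R`-linear triangulated category which admits an object
`X` with `Hom(Y,X) ≠ 0` for all non-zero `Y`, then the category has only finitely many
isomorphism classes of indecomposable objects. -/
theorem finite_indecomposables_of_ar_generate_relations
    (hfin : HomFinite C R) (hKS : KrullSchmidt C)
    (hEx : ExSubgroup C = ARSubgroup C)
    (hX : ∃ X : C, ∀ Y : C, ¬ IsZero Y → ∃ f : Y ⟶ X, f ≠ 0) :
    ∃ L : List C, ∀ U : C, Indecomposable U → ∃ V ∈ L, Nonempty (U ≅ V) :=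
  finite_indecomposables_of_ar_generate_relations_general hfin hEx hX
end

section
/- Let C be an essentially small R-linear Frobenius exact category whose stable category is Hom-finite, and suppose C is Krull-Schmidt. If the subgroup Ex(C) of K₀(C,0) generated by [X] − [Y] + [Z] over all short exact sequences 0 → X → Y → Z → 0 equals the subgroup AR(C) generated by such elements from Auslander-Reiten sequences, then in the stable category C̄ one has Ex(C̄) = AR(C̄) in K₀(C̄,0). -/
open CategoryTheory CategoryTheory.Limits CategoryTheory.Pretriangulated

universe v u

universe v₂ u₂

section Frobenius

variable {C : Type u} [Category.{v} C] [Preadditive C]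

/-- `S.f` is a kernel of `S.g` and `S.g` is a cokernel of `S.f`. -/
def IsKernelCokernelPair (S : ShortComplex C) : Prop :=
  Mono S.f ∧ Epi S.g ∧
    Nonempty (IsLimit (KernelFork.ofι S.f S.zero)) ∧
    Nonempty (IsColimit (CokernelCofork.ofπ S.g S.zero))

/-- `f` is an admissible monomorphism for a class `E` of conflations. -/
def AdmMonoOf (E : Set (ShortComplex C)) {X Y : C} (f : X ⟶ Y) : Prop :=
  ∃ (Z : C) (g : Y ⟶ Z) (w : f ≫ g = 0), ShortComplex.mk f g w ∈ E

/-- `g` is an admissible epimorphism for a class `E` of conflations. -/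
def AdmEpiOf (E : Set (ShortComplex C)) {Y Z : C} (g : Y ⟶ Z) : Prop :=
  ∃ (X : C) (f : X ⟶ Y) (w : f ≫ g = 0), ShortComplex.mk f g w ∈ E

/-- A Quillen exact structure on an additive category: a class of conflations
(kernel-cokernel pairs) closed under isomorphism, containing the split exact
sequences, with admissible monomorphisms and epimorphisms closed under composition,
and admissible monomorphisms (resp. epimorphisms) stable under pushout
(resp. pullback) along arbitrary morphisms. -/
structure ExactStructure (C : Type u) [Category.{v} C] [Preadditive C]
    [HasBinaryBiproducts C] where
  conflations : Set (ShortComplex C)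
  ker_coker : ∀ S ∈ conflations, IsKernelCokernelPair S
  iso_closed : ∀ S₁ ∈ conflations, ∀ S₂ : ShortComplex C,
    Nonempty (S₂ ≅ S₁) → S₂ ∈ conflations
  split_mem : ∀ X Y : C,
    ShortComplex.mk (biprod.inl : X ⟶ X ⊞ Y) (biprod.snd : X ⊞ Y ⟶ Y) (by simp) ∈
      conflations
  admMono_comp : ∀ {X Y Z : C} (f : X ⟶ Y) (g : Y ⟶ Z),
    AdmMonoOf conflations f → AdmMonoOf conflations g → AdmMonoOf conflations (f ≫ g)
  admEpi_comp : ∀ {X Y Z : C} (f : X ⟶ Y) (g : Y ⟶ Z),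
    AdmEpiOf conflations f → AdmEpiOf conflations g → AdmEpiOf conflations (f ≫ g)
  pushout_admMono : ∀ {X Y X' : C} (f : X ⟶ Y) (u : X ⟶ X'), AdmMonoOf conflations f →
    ∃ (P : C) (fst : Y ⟶ P) (snd : X' ⟶ P),
      IsPushout f u fst snd ∧ AdmMonoOf conflations snd
  pullback_admEpi : ∀ {Y Z Z' : C} (g : Y ⟶ Z) (v : Z' ⟶ Z), AdmEpiOf conflations g →
    ∃ (P : C) (fst : P ⟶ Y) (snd : P ⟶ Z'),
      IsPullback fst snd g v ∧ AdmEpiOf conflations snd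

variable [HasBinaryBiproducts C]

/-- Projectivity relative to an exact structure. -/
def EProjective (E : ExactStructure C) (P : C) : Prop :=
  ∀ S ∈ E.conflations, ∀ t : P ⟶ S.X₃, ∃ t' : P ⟶ S.X₂, t' ≫ S.g = t

/-- Injectivity relative to an exact structure. -/
def EInjective (E : ExactStructure C) (I : C) : Prop :=
  ∀ S ∈ E.conflations, ∀ t : S.X₁ ⟶ I, ∃ t' : S.X₂ ⟶ I, S.f ≫ t' = t

/-- A Frobenius category: enough projectives and injectives, and these coincide. -/
structure IsFrobenius (E : ExactStructure C) : Prop where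
  enough_proj : ∀ X : C, ∃ S ∈ E.conflations, S.X₃ = X ∧ EProjective E S.X₂
  enough_inj : ∀ X : C, ∃ S ∈ E.conflations, S.X₁ = X ∧ EInjective E S.X₂
  proj_iff_inj : ∀ X : C, EProjective E X ↔ EInjective E X

/-- An Auslander-Reiten sequence: a non-split conflation with indecomposable end
terms such that every non-split-epimorphism into the third term factors through `g`. -/
def IsARSequence (E : ExactStructure C) (S : ShortComplex C) : Prop :=
  S ∈ E.conflations ∧ Indecomposable S.X₁ ∧ Indecomposable S.X₃ ∧ ¬ IsSplitEpi S.g ∧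
    ∀ ⦃W : C⦄ (t : W ⟶ S.X₃), ¬ IsSplitEpi t → ∃ t' : W ⟶ S.X₂, t' ≫ S.g = t

/-- The subgroup `Ex(C)` of `K₀(C,0)` generated by the conflations. -/
noncomputable def ExSubgroupE (E : ExactStructure C) : AddSubgroup (K0 C) :=
  AddSubgroup.closure {x | ∃ S ∈ E.conflations, x = cls C S.X₁ - cls C S.X₂ + cls C S.X₃}

/-- The subgroup `AR(C)` of `K₀(C,0)` generated by the Auslander-Reiten sequences. -/
noncomputable def ARSubgroupE (E : ExactStructure C) : AddSubgroup (K0 C) :=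
  AddSubgroup.closure {x | ∃ S, IsARSequence E S ∧ x = cls C S.X₁ - cls C S.X₂ + cls C S.X₃}

/-- Data exhibiting a triangulated category `D` as the stable category of a Frobenius
category `C` with exact structure `E`: a full additive essentially surjective functor
`π` whose vanishing ideal consists of the morphisms factoring through a projective,
such that the conflations of `C` correspond to the distinguished triangles of `D`
(the shift `⟦1⟧` of `D` playing the role of the cosyzygy functor `Ω⁻¹`). -/
structure StableModel (E : ExactStructure C) (D : Type u₂) [Category.{v₂} D]
    [Preadditive D] [HasZeroObject D] [HasShift D ℤ]
    [∀ n : ℤ, (shiftFunctor D n).Additive] [Pretriangulated D] where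
  π : C ⥤ D
  additive : π.Additive
  full : ∀ {X Y : C} (g : π.obj X ⟶ π.obj Y), ∃ f : X ⟶ Y, π.map f = g
  surj_obj : ∀ d : D, ∃ X : C, Nonempty (d ≅ π.obj X)
  map_eq_zero_iff : ∀ {X Y : C} (f : X ⟶ Y), π.map f = 0 ↔
    ∃ (P : C) (_ : EProjective E P) (a : X ⟶ P) (b : P ⟶ Y), a ≫ b = f
  ses_triangle : ∀ S ∈ E.conflations,
    ∃ h : π.obj S.X₃ ⟶ (π.obj S.X₁)⟦(1 : ℤ)⟧,
      Triangle.mk (π.map S.f) (π.map S.g) h ∈ distTriang D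
  triangle_ses : ∀ T ∈ distTriang D, ∃ S ∈ E.conflations,
    ∃ h : π.obj S.X₃ ⟶ (π.obj S.X₁)⟦(1 : ℤ)⟧,
      Nonempty (T ≅ Triangle.mk (π.map S.f) (π.map S.g) h)

end Frobenius

universe w

variable {R : Type w} [CommRing R]
variable {C : Type u} [Category.{v} C] [Preadditive C] [CategoryTheory.Linear R C]
  [HasBinaryBiproducts C] [HasFiniteBiproducts C] [EssentiallySmall.{v} C]
variable {D : Type u₂} [Category.{v₂} D] [Preadditive D] [CategoryTheory.Linear R D]
  [HasZeroObject D] [HasShift D ℤ] [∀ n : ℤ, (shiftFunctor D n).Additive]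
  [Pretriangulated D] [HasBinaryBiproducts D] [EssentiallySmall.{v₂} D]

/-! The functor `π : C ⥤ D` onto the stable category sends every conflation to a distinguished
triangle and every distinguished triangle is isomorphic to such an image, so the induced map
`K₀(C,0) → K₀(D,0)` carries `Ex(C)` onto `Ex(D)`. It also carries `AR(C)` into `AR(D)`: the
image of an Auslander-Reiten sequence is an Auslander-Reiten triangle. Its end terms stay
indecomposable because their endomorphism rings are local (Krull-Schmidt) and the stable
endomorphism rings are nonzero quotients of them; they are nonzero since neither end term of a
non-split conflation is projective, using projective = injective for the first one. Hence
`Ex(D) = π Ex(C) = π AR(C) ⊆ AR(D)`. -/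

section LocalRing

variable {R : Type*} [Ring R] [IsLocalRing R]

theorem IsLocalRing.of_ringHom_surjective {S : Type*} [Ring S] [Nontrivial S] (f : R →+* S)
    (hf : Function.Surjective f) : IsLocalRing S :=
  IsLocalRing.of_isUnit_or_isUnit_one_sub_self fun b => by
    obtain ⟨a, rfl⟩ := hf b
    rw [← map_one f, ← map_sub]
    exact (IsLocalRing.isUnit_or_isUnit_of_add_one (add_sub_cancel a 1)).imp
      f.isUnit_map f.isUnit_map

theorem IsLocalRing.eq_zero_or_eq_one_of_isIdempotentElem {e : R} (he : IsIdempotentElem e) :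
    e = 0 ∨ e = 1 := by
  rcases IsLocalRing.isUnit_or_isUnit_of_add_one (add_sub_cancel e 1) with hu | hu
  · exact Or.inr ((IsIdempotentElem.iff_eq_one_of_isUnit hu).1 he)
  · exact Or.inl (sub_eq_self.1 ((IsIdempotentElem.iff_eq_one_of_isUnit hu).1 he.one_sub))

end LocalRing

namespace CategoryTheory

theorem IsIsomorphic.map {C D : Type*} [Category C] [Category D] (F : C ⥤ D)
    {X Y : C} (h : IsIsomorphic X Y) : IsIsomorphic (F.obj X) (F.obj Y) :=
  let ⟨e⟩ := h; ⟨F.mapIso e⟩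

variable {C : Type*} [Category C] [Preadditive C]

def Iso.conjRingEquiv {X Y : C} (e : X ≅ Y) : End X ≃+* End Y :=
  { e.conj with
    map_add' := fun f g => by
      show e.inv ≫ (f + g : X ⟶ X) ≫ e.hom = e.inv ≫ f ≫ e.hom + e.inv ≫ g ≫ e.hom
      rw [Preadditive.add_comp, Preadditive.comp_add] }

def Functor.mapEndRingHom {D : Type*} [Category D] [Preadditive D] (F : C ⥤ D)
    [F.Additive] (X : C) : End X →+* End (F.obj X) :=
  { F.mapEnd X with
    map_zero' := F.map_zero X X
    map_add' := fun _ _ => F.map_add }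

theorem isLocalRing_end_of_iso {X Y : C} (e : X ≅ Y) [IsLocalRing (End Y)] :
    IsLocalRing (End X) :=
  (e.conjRingEquiv : End X →+* End Y).domain_isLocalRing

theorem indecomposable_of_isLocalRing_end [HasBinaryBiproducts C] {X : C}
    [IsLocalRing (End X)] : Indecomposable X := by
  refine ⟨fun hX => one_ne_zero (α := End X) ((IsZero.iff_id_eq_zero X).1 hX),
    fun Y Z φ => ?_⟩
  have : IsLocalRing (End (Y ⊞ Z)) := isLocalRing_end_of_iso φ.symm
  have hidem : IsIdempotentElem (M := End (Y ⊞ Z)) (biprod.fst ≫ biprod.inl) := by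
    simp [IsIdempotentElem, End.mul_def]
  rcases IsLocalRing.eq_zero_or_eq_one_of_isIdempotentElem hidem with h | h
  · left
    rw [IsZero.iff_id_eq_zero]
    calc 𝟙 Y = biprod.inl ≫ (biprod.fst ≫ biprod.inl) ≫ biprod.fst := by simp
      _ = 0 := by rw [show (biprod.fst ≫ biprod.inl : Y ⊞ Z ⟶ Y ⊞ Z) = 0 from h]; simp
  · right
    rw [IsZero.iff_id_eq_zero]
    calc 𝟙 Z = biprod.inr ≫ 𝟙 (Y ⊞ Z) ≫ biprod.snd := by simp
      _ = 0 := by rw [show 𝟙 (Y ⊞ Z) = biprod.fst ≫ biprod.inl from h.symm]; simp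

theorem Functor.indecomposable_obj_of_full {D : Type*} [Category D] [Preadditive D]
    [HasBinaryBiproducts D] (F : C ⥤ D) [F.Additive] [F.Full] {X : C} [IsLocalRing (End X)]
    (hX : ¬ IsZero (F.obj X)) : Indecomposable (F.obj X) :=
  have : Nontrivial (End (F.obj X)) :=
    ⟨⟨1, 0, fun h => hX ((IsZero.iff_id_eq_zero _).2 h)⟩⟩
  have := IsLocalRing.of_ringHom_surjective (F.mapEndRingHom X) F.map_surjective
  indecomposable_of_isLocalRing_end

noncomputable def biproductFinSuccIso [HasBinaryBiproducts C] [HasFiniteBiproducts C] {n : ℕ}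
    (f : Fin (n + 1) → C) :
    (⨁ f) ≅ f 0 ⊞ ⨁ (fun j : Fin n => f j.succ) where
  hom := biprod.lift (biproduct.π f 0) (biproduct.lift (fun j => biproduct.π f j.succ))
  inv := biprod.desc (biproduct.ι f 0) (biproduct.desc (fun j => biproduct.ι f j.succ))
  hom_inv_id := by
    rw [biprod.lift_desc, biproduct.lift_desc, ← biproduct.total, Fin.sum_univ_succ]
  inv_hom_id := by
    apply biprod.hom_ext' <;> apply biprod.hom_ext
    · simp
    · apply biproduct.hom_ext; intro j
      simp [biproduct.ι_π_ne f (Fin.succ_ne_zero j).symm]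
    · apply biproduct.hom_ext'; intro j
      simp [biproduct.ι_π_ne f (Fin.succ_ne_zero j)]
    · apply biproduct.hom_ext'; intro j; apply biproduct.hom_ext; intro k
      by_cases h : j = k
      · subst h; simp
      · simp [biproduct.ι_π_ne f (fun hh => h (Fin.succ_injective _ hh)),
          biproduct.ι_π_ne _ h]

theorem Indecomposable.exists_iso_of_iso_biproduct
    [HasBinaryBiproducts C] [HasFiniteBiproducts C] {X : C} (hX : Indecomposable X) :
    ∀ {n : ℕ} (f : Fin n → C), (X ≅ ⨁ f) → ∃ i, Nonempty (X ≅ f i)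
  | 0, f, φ => absurd (IsZero.of_iso ((IsZero.iff_id_eq_zero _).2
      (biproduct.hom_ext _ _ fun j => j.elim0)) φ) hX.1
  | _ + 1, f, φ => by
    rcases hX.2 _ _ (φ ≪≫ biproductFinSuccIso f) with h | h
    · obtain ⟨i, ⟨ψ⟩⟩ := Indecomposable.exists_iso_of_iso_biproduct hX _
        (φ ≪≫ biproductFinSuccIso f ≪≫ (isoZeroBiprod h).symm)
      exact ⟨i.succ, ⟨ψ⟩⟩
    · exact ⟨0, ⟨φ ≪≫ biproductFinSuccIso f ≪≫ (isoBiprodZero h).symm⟩⟩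

end CategoryTheory

theorem KrullSchmidt.isLocalRing_end {C : Type*} [Category C] [Preadditive C]
    [HasBinaryBiproducts C] [HasFiniteBiproducts C] (hKS : KrullSchmidt C) {X : C}
    (hX : Indecomposable X) : IsLocalRing (End X) := by
  obtain ⟨n, f, ⟨φ⟩, hloc⟩ := hKS X
  obtain ⟨i, ⟨ψ⟩⟩ := hX.exists_iso_of_iso_biproduct f φ
  have := hloc i
  exact isLocalRing_end_of_iso ψ

section K0

variable {C : Type*} [Category C] [Preadditive C] [HasBinaryBiproducts C]

theorem cls_eq_of_iso {X Y : C} (e : X ≅ Y) : cls C X = cls C Y :=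
  congrArg (fun q => QuotientAddGroup.mk (FreeAbelianGroup.of q)) (Quotient.sound ⟨e⟩)

variable {D : Type*} [Category D] [Preadditive D] [HasBinaryBiproducts D]

noncomputable def CategoryTheory.Functor.mapK0 (F : C ⥤ D) [F.Additive] : K0 C →+ K0 D :=
  QuotientAddGroup.map (splitSubgroup C) (splitSubgroup D)
    (FreeAbelianGroup.map (_root_.Quotient.map F.obj fun _ _ => IsIsomorphic.map F)) <| by
      refine (AddSubgroup.closure_le _).2 ?_
      rintro _ ⟨X, Y, rfl⟩
      have := preservesBinaryBiproduct_of_preservesBiproduct F X Y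
      have hbiprod : (⟦F.obj (X ⊞ Y)⟧ : _root_.Quotient (isIsomorphicSetoid D)) =
          ⟦F.obj X ⊞ F.obj Y⟧ := _root_.Quotient.sound ⟨F.mapBiprod X Y⟩
      show FreeAbelianGroup.map _ (FreeAbelianGroup.of ⟦X ⊞ Y⟧ - FreeAbelianGroup.of ⟦X⟧ -
        FreeAbelianGroup.of (⟦Y⟧ : _root_.Quotient (isIsomorphicSetoid C))) ∈ splitSubgroup D
      rw [_root_.map_sub, _root_.map_sub, FreeAbelianGroup.map_of_apply, Quotient.map_mk,
        hbiprod]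
      exact AddSubgroup.subset_closure ⟨F.obj X, F.obj Y, rfl⟩

@[simp]
theorem CategoryTheory.Functor.mapK0_cls (F : C ⥤ D) [F.Additive] (X : C) :
    F.mapK0 (cls C X) = cls D (F.obj X) :=
  rfl

end K0

section Frobenius

variable {C : Type*} [Category C] [Preadditive C] [HasBinaryBiproducts C] {E : ExactStructure C}

theorem EProjective.of_retract {X P : C} (hP : EProjective E P) (a : X ⟶ P) (b : P ⟶ X)
    (hab : a ≫ b = 𝟙 X) : EProjective E X := by
  intro S hS t
  obtain ⟨t', ht'⟩ := hP S hS (b ≫ t)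
  exact ⟨a ≫ t', by rw [Category.assoc, ht', reassoc_of% hab]⟩

theorem not_eProjective_X₃_of_not_isSplitEpi {S : ShortComplex C} (hS : S ∈ E.conflations)
    (hns : ¬ IsSplitEpi S.g) : ¬ EProjective E S.X₃ := fun hP =>
  let ⟨t', ht'⟩ := hP S hS (𝟙 S.X₃)
  hns ⟨⟨⟨t', ht'⟩⟩⟩

theorem not_eInjective_X₁_of_not_isSplitEpi {S : ShortComplex C} (hS : S ∈ E.conflations)
    (hns : ¬ IsSplitEpi S.g) : ¬ EInjective E S.X₁ := by
  intro hI
  obtain ⟨r, hr⟩ := hI S hS (𝟙 S.X₁)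
  obtain ⟨-, hepi, -, ⟨hcoker⟩⟩ := E.ker_coker S hS
  -- `𝟙 - r ≫ S.f` kills `S.f`, so it descends along the cokernel `S.g` to a section of `S.g`
  have hw : S.f ≫ (𝟙 S.X₂ - r ≫ S.f) = 0 := by
    rw [Preadditive.comp_sub, reassoc_of% hr, Category.comp_id, sub_self]
  obtain ⟨l, hl⟩ := CokernelCofork.IsColimit.desc' hcoker _ hw
  refine hns ⟨⟨⟨l, (cancel_epi S.g).1 ?_⟩⟩⟩
  simp only [CokernelCofork.π_ofπ] at hl
  rw [reassoc_of% hl, Preadditive.sub_comp, Category.assoc, S.zero, comp_zero, sub_zero,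
    Category.id_comp, Category.comp_id]

end Frobenius

theorem arSubgroup_le_exSubgroup (D : Type*) [Category D] [Preadditive D] [HasZeroObject D]
    [HasShift D ℤ] [∀ n : ℤ, (shiftFunctor D n).Additive] [Pretriangulated D]
    [HasBinaryBiproducts D] : ARSubgroup D ≤ ExSubgroup D :=
  AddSubgroup.closure_mono fun _ ⟨T, hT, hx⟩ => ⟨T, hT.1, hx⟩

attribute [instance] StableModel.additive

namespace StableModel

variable {C : Type*} [Category C] [Preadditive C] [HasBinaryBiproducts C] {E : ExactStructure C}
variable {D : Type*} [Category D] [Preadditive D] [HasZeroObject D] [HasShift D ℤ]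
  [∀ n : ℤ, (shiftFunctor D n).Additive] [Pretriangulated D] (M : StableModel E D)

instance full_π : M.π.Full :=
  ⟨fun g => M.full g⟩

theorem not_isZero_obj {X : C} (hX : ¬ EProjective E X) : ¬ IsZero (M.π.obj X) := by
  intro hz
  obtain ⟨P, hP, a, b, hab⟩ :=
    (M.map_eq_zero_iff (𝟙 X)).1 (by rw [M.π.map_id]; exact hz.eq_of_src _ _)
  exact hX (hP.of_retract a b hab)

theorem isSplitEpi_of_isSplitEpi_map {S : ShortComplex C} (hS : S ∈ E.conflations)
    (hsplit : IsSplitEpi (M.π.map S.g)) : IsSplitEpi S.g := by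
  obtain ⟨⟨s, hs⟩⟩ := hsplit
  obtain ⟨s', rfl⟩ := M.π.map_surjective s
  -- `s' ≫ S.g` differs from `𝟙` by a map through a projective, which lifts along `S.g`
  obtain ⟨P, hP, a, b, hab⟩ := (M.map_eq_zero_iff (s' ≫ S.g - 𝟙 S.X₃)).1 (by
    rw [Functor.map_sub, Functor.map_comp, hs, M.π.map_id, sub_self])
  obtain ⟨c, hc⟩ := hP S hS b
  refine ⟨⟨⟨s' - a ≫ c, ?_⟩⟩⟩
  rw [Preadditive.sub_comp, Category.assoc, hc, hab, sub_sub_cancel]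

theorem mor₃_ne_zero {S : ShortComplex C} (hS : S ∈ E.conflations) (hns : ¬ IsSplitEpi S.g)
    {h : M.π.obj S.X₃ ⟶ (M.π.obj S.X₁)⟦(1 : ℤ)⟧}
    (hT : Triangle.mk (M.π.map S.f) (M.π.map S.g) h ∈ distTriang D) : h ≠ 0 := by
  rintro rfl
  obtain ⟨s, hs⟩ := Triangle.coyoneda_exact₃ _ hT (𝟙 (M.π.obj S.X₃)) comp_zero
  exact hns (M.isSplitEpi_of_isSplitEpi_map hS ⟨⟨⟨s, hs.symm⟩⟩⟩)

theorem exists_comp_map_eq_of_not_isSplitEpi {Y Z : C} (g : Y ⟶ Z)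
    (hg : ∀ ⦃W : C⦄ (t : W ⟶ Z), ¬ IsSplitEpi t → ∃ t' : W ⟶ Y, t' ≫ g = t)
    ⦃W : D⦄ (t : W ⟶ M.π.obj Z) (ht : ¬ IsSplitEpi t) :
    ∃ t' : W ⟶ M.π.obj Y, t' ≫ M.π.map g = t := by
  obtain ⟨X, ⟨ψ⟩⟩ := M.surj_obj W
  obtain ⟨u, hu⟩ := M.π.map_surjective (ψ.inv ≫ t)
  have hu_ns : ¬ IsSplitEpi u := by
    rintro ⟨⟨r, hr⟩⟩
    refine ht ⟨⟨⟨M.π.map r ≫ ψ.inv, ?_⟩⟩⟩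
    rw [Category.assoc, ← hu, ← Functor.map_comp, hr, M.π.map_id]
  obtain ⟨u', rfl⟩ := hg u hu_ns
  exact ⟨ψ.hom ≫ M.π.map u', by
    rw [Category.assoc, ← Functor.map_comp, hu, Iso.hom_inv_id_assoc]⟩

variable [HasBinaryBiproducts D]

theorem indecomposable_obj [HasFiniteBiproducts C] (hKS : KrullSchmidt C) {X : C}
    (hX : Indecomposable X) (hproj : ¬ EProjective E X) : Indecomposable (M.π.obj X) :=
  have := hKS.isLocalRing_end hX
  M.π.indecomposable_obj_of_full (M.not_isZero_obj hproj)

theorem isARTriangle_of_isARSequence [HasFiniteBiproducts C] (hFrob : IsFrobenius E)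
    (hKS : KrullSchmidt C) {S : ShortComplex C} (hAR : IsARSequence E S)
    {h : M.π.obj S.X₃ ⟶ (M.π.obj S.X₁)⟦(1 : ℤ)⟧}
    (hT : Triangle.mk (M.π.map S.f) (M.π.map S.g) h ∈ distTriang D) :
    IsARTriangle D (Triangle.mk (M.π.map S.f) (M.π.map S.g) h) :=
  let ⟨hS, hX₁, hX₃, hns, hfac⟩ := hAR
  ⟨hT,
    M.indecomposable_obj hKS hX₁ fun hP =>
      not_eInjective_X₁_of_not_isSplitEpi hS hns ((hFrob.proj_iff_inj _).1 hP),
    M.indecomposable_obj hKS hX₃ (not_eProjective_X₃_of_not_isSplitEpi hS hns),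
    M.mor₃_ne_zero hS hns hT, M.exists_comp_map_eq_of_not_isSplitEpi S.g hfac⟩

theorem map_arSubgroupE_le [HasFiniteBiproducts C] (hFrob : IsFrobenius E)
    (hKS : KrullSchmidt C) : (ARSubgroupE E).map M.π.mapK0 ≤ ARSubgroup D := by
  rw [ARSubgroupE, AddMonoidHom.map_closure]
  refine AddSubgroup.closure_mono ?_
  rintro _ ⟨_, ⟨S, hAR, rfl⟩, rfl⟩
  obtain ⟨h, hT⟩ := M.ses_triangle S hAR.1
  exact ⟨_, M.isARTriangle_of_isARSequence hFrob hKS hAR hT, by simp⟩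

theorem exSubgroup_le_map_exSubgroupE : ExSubgroup D ≤ (ExSubgroupE E).map M.π.mapK0 := by
  rw [ExSubgroupE, AddMonoidHom.map_closure]
  refine AddSubgroup.closure_mono ?_
  rintro _ ⟨T, hT, rfl⟩
  obtain ⟨S, hS, h, ⟨e⟩⟩ := M.triangle_ses T hT
  refine ⟨_, ⟨S, hS, rfl⟩, ?_⟩
  simp only [map_add, map_sub, Functor.mapK0_cls]
  have h₁ : cls D T.obj₁ = cls D (M.π.obj S.X₁) := cls_eq_of_iso (Triangle.π₁.mapIso e)
  have h₂ : cls D T.obj₂ = cls D (M.π.obj S.X₂) := cls_eq_of_iso (Triangle.π₂.mapIso e)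
  have h₃ : cls D T.obj₃ = cls D (M.π.obj S.X₃) := cls_eq_of_iso (Triangle.π₃.mapIso e)
  rw [h₁, h₂, h₃]

end StableModel

theorem exSubgroup_eq_arSubgroup_of_frobenius_general
    (E : ExactStructure C) (hFrob : IsFrobenius E) (M : StableModel E D)
    (hKS : KrullSchmidt C)
    (hEx : ExSubgroupE E = ARSubgroupE E) :
    ExSubgroup D = ARSubgroup D := by
  refine le_antisymm ?_ (arSubgroup_le_exSubgroup D)
  calc ExSubgroup D ≤ (ExSubgroupE E).map M.π.mapK0 := M.exSubgroup_le_map_exSubgroupE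
    _ = (ARSubgroupE E).map M.π.mapK0 := by rw [hEx]
    _ ≤ ARSubgroup D := M.map_arSubgroupE_le hFrob hKS

/-- If the Auslander-Reiten sequences generate the relations for the Grothendieck group
of a Krull-Schmidt Frobenius category `C` with Hom-finite stable category, then the
Auslander-Reiten triangles generate the relations for the Grothendieck group of the
stable category. -/
theorem exSubgroup_eq_arSubgroup_of_frobenius
    (E : ExactStructure C) (hFrob : IsFrobenius E) (M : StableModel E D)
    (hKS : KrullSchmidt C) (hfin : HomFinite D R)
    (hEx : ExSubgroupE E = ARSubgroupE E) :
    ExSubgroup D = ARSubgroup D :=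
  exSubgroup_eq_arSubgroup_of_frobenius_general E hFrob M hKS hEx
end
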